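/- arXiv:math/0502085 — 4 statements merged into one kernel-verified Lean document; each statement's English description precedes it below -/
import Mathlib

section
/- For all real numbers a > 0 and b > e^{1/e}, one has log(a)/log(b) < 1 + a/b. -/
theorem log_div_log_lt_one_add_div (a b : ℝ) (ha : 0 < a)
    (hb : Real.exp (1 / Real.exp 1) < b) :
    Real.log a / Real.log b < 1 + a / b := by
  have he : (0:ℝ) < Real.exp 1 := Real.exp_pos 1
  have hb0 : (0:ℝ) < b := lt_trans (Real.exp_pos _) hb
  have hlb : 1 / Real.exp 1 < Real.log b := by
    have := Real.log_lt_log (Real.exp_pos _) hb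
    rwa [Real.log_exp] at this
  have hlb0 : 0 < Real.log b := lt_trans (by positivity) hlb
  rcases le_or_gt a b with h | h
  · have h1 : Real.log a / Real.log b ≤ 1 := by
      rw [div_le_one hlb0]
      exact Real.log_le_log ha h
    have : 0 < a / b := div_pos ha hb0
    linarith
  · -- a > b, so log a > 0
    rw [div_lt_iff₀ hlb0]
    have hab : 0 < a / b := div_pos ha hb0
    have hlog : Real.log a = Real.log b + Real.log (a / b) := by
      rw [Real.log_div (ne_of_gt ha) (ne_of_gt hb0)]; ring
    have hle : Real.log (a / b) ≤ (a / b) / Real.exp 1 := by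
      have h2 : Real.log (a / b / Real.exp 1) ≤ a / b / Real.exp 1 - 1 :=
        Real.log_le_sub_one_of_pos (by positivity)
      rw [Real.log_div (ne_of_gt hab) (ne_of_gt he), Real.log_exp] at h2
      linarith
    have hinv : (Real.exp 1)⁻¹ < Real.log b := by rwa [one_div] at hlb
    have h3 : (a / b) / Real.exp 1 < (a / b) * Real.log b := by
      rw [div_eq_mul_inv]
      exact mul_lt_mul_of_pos_left hinv hab
    calc Real.log a = Real.log b + Real.log (a / b) := hlog
      _ ≤ Real.log b + (a / b) / Real.exp 1 := by linarith
      _ < Real.log b + (a / b) * Real.log b := by linarith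
      _ = (1 + a / b) * Real.log b := by ring
end

section
/- For every real number a with 0 < a ≤ 1, one has ∫₀¹ log(1/r)/(r + a) dr ≤ 1 + log(1/a) + (1/2)·log²(1/a). -/
/-!
Since `r + a ≥ max r a` and `log (1 / r) ≥ 0` on `(0, 1]`, the integrand is dominated by
`log (1 / r) / max r a`, whose integral is computed exactly: on `(0, a)` it is
`(1 / a) ∫₀ᵃ log (1 / r) dr = 1 + log (1 / a)`, and on `(a, 1)` it is
`∫ₐ¹ log (1 / r) / r dr = log² (1 / a) / 2`.
-/

open MeasureTheory Real Set intervalIntegral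

theorem integral_log_div_self {a b : ℝ} (ha : 0 < a) (hb : 0 < b) :
    ∫ x in a..b, log x / x = (log b ^ 2 - log a ^ 2) / 2 := by
  have hpos : ∀ x ∈ uIcc a b, 0 < x := fun x hx => (lt_min ha hb).trans_le hx.1
  rw [integral_eq_sub_of_hasDerivAt (f := fun x => log x ^ 2 / 2)]
  · ring
  · intro x hx
    refine (((hasDerivAt_log (hpos x hx).ne').fun_pow 2).div_const 2).congr_deriv ?_
    norm_num
    ring
  · exact ContinuousOn.intervalIntegrable fun x hx =>
      ((continuousAt_log (hpos x hx).ne').div continuousAt_id (hpos x hx).ne').continuousWithinAt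

theorem neg_log_div_add_le_div_max {r a : ℝ} (hr0 : 0 < r) (hr1 : r ≤ 1) (ha : 0 ≤ a) :
    -log r / (r + a) ≤ -log r / max r a :=
  div_le_div_of_nonneg_left (neg_nonneg.2 (log_nonpos hr0.le hr1)) (lt_max_of_lt_left hr0)
    (max_le_add_of_nonneg hr0.le ha)

section DominatingFunction

variable {a : ℝ}

theorem eqOn_neg_log_div_max_left (ha : 0 ≤ a) :
    EqOn (fun r => -log r / max r a) (fun r => -log r / a) (uIcc 0 a) := by
  intro r hr
  rw [uIcc_of_le ha] at hr
  simp only [max_eq_right hr.2]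

theorem eqOn_neg_log_div_max_right (ha : a ≤ 1) :
    EqOn (fun r => -log r / max r a) (fun r => -log r / r) (uIcc a 1) := by
  intro r hr
  rw [uIcc_of_le ha] at hr
  simp only [max_eq_left hr.1]

theorem intervalIntegrable_neg_log_div_max_left (ha : 0 ≤ a) :
    IntervalIntegrable (fun r => -log r / max r a) volume 0 a :=
  (intervalIntegrable_log'.neg.div_const a).congr
    ((eqOn_neg_log_div_max_left ha).symm.mono uIoc_subset_uIcc)

theorem intervalIntegrable_neg_log_div_max_right (ha0 : 0 < a) (ha1 : a ≤ 1) :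
    IntervalIntegrable (fun r => -log r / max r a) volume a 1 := by
  refine (ContinuousOn.intervalIntegrable ?_).congr
    ((eqOn_neg_log_div_max_right ha1).symm.mono uIoc_subset_uIcc)
  intro r hr
  have hr0 : 0 < r := ha0.trans_le (uIcc_of_le ha1 ▸ hr).1
  exact ((continuousAt_log hr0.ne').neg.div continuousAt_id hr0.ne').continuousWithinAt

theorem integral_neg_log_div_max (ha0 : 0 < a) (ha1 : a ≤ 1) :
    ∫ r in (0 : ℝ)..1, -log r / max r a = 1 - log a + log a ^ 2 / 2 := by
  rw [← integral_add_adjacent_intervals (intervalIntegrable_neg_log_div_max_left ha0.le)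
    (intervalIntegrable_neg_log_div_max_right ha0 ha1),
    integral_congr (eqOn_neg_log_div_max_left ha0.le),
    integral_congr (eqOn_neg_log_div_max_right ha1)]
  simp only [intervalIntegral.integral_div, intervalIntegral.integral_neg, neg_div,
    integral_log_from_zero, integral_log_div_self ha0 one_pos, log_one]
  field_simp
  ring

end DominatingFunction

theorem integral_log_div_add_le (a : ℝ) (ha0 : 0 < a) (ha1 : a ≤ 1) :
    ∫ r in Set.Ioo (0 : ℝ) 1, Real.log (1 / r) / (r + a) ≤
      1 + Real.log (1 / a) + (1 / 2) * (Real.log (1 / a)) ^ 2 := by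
  simp only [one_div, log_inv]
  have hdom : IntegrableOn (fun r => -log r / max r a) (Ioo 0 1) :=
    (intervalIntegrable_iff_integrableOn_Ioo_of_le zero_le_one).mp
      ((intervalIntegrable_neg_log_div_max_left ha0.le).trans
        (intervalIntegrable_neg_log_div_max_right ha0 ha1))
  calc ∫ r in Ioo (0 : ℝ) 1, -log r / (r + a)
      ≤ ∫ r in Ioo (0 : ℝ) 1, -log r / max r a := by
        refine integral_mono_of_nonneg (ae_restrict_of_forall_mem measurableSet_Ioo fun r hr => ?_)
          hdom (ae_restrict_of_forall_mem measurableSet_Ioo fun r hr => ?_)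
        · exact div_nonneg (neg_nonneg.2 (log_nonpos hr.1.le hr.2.le)) (by linarith [hr.1])
        · exact neg_log_div_add_le_div_max hr.1 hr.2.le ha0.le
    _ = ∫ r in (0 : ℝ)..1, -log r / max r a := by
        rw [integral_of_le zero_le_one, integral_Ioc_eq_integral_Ioo]
    _ = 1 + -log a + 2⁻¹ * (-log a) ^ 2 := by rw [integral_neg_log_div_max ha0 ha1]; ring
end

section
/- For every natural number N and every real ε with 0 < ε < e^{-e}, the function z ↦ (log(log(1/|z|)))^N / (|z| · log(1/|z|))² is Lebesgue integrable on the punctured disk {z ∈ ℂ : 0 < |z| < ε}. -/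
/-!
In polar coordinates the integrand becomes `r ↦ r f(r)` on `(0, ε)`, and the substitution
`r = e^{-t}` turns this into `t ↦ (log t)^N / t²` on `(-log ε, ∞)`. Since `(log t)^N` grows
more slowly than any positive power of `t`, the latter is dominated by an integrable power
`t^{-3/2}` at infinity.
-/

open MeasureTheory Set Filter Real Asymptotics

theorem integrableOn_Ioo_zero_exp_neg_iff {F : Type*} [NormedAddCommGroup F] [NormedSpace ℝ F]
    {g : ℝ → F} (a : ℝ) :
    IntegrableOn g (Ioo 0 (exp (-a))) ↔
      IntegrableOn (fun t => exp (-t) • g (exp (-t))) (Ioi a) := by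
  have himage : (fun t => exp (-t)) '' Ioi a = Ioo 0 (exp (-a)) := by
    rw [← image_exp_Iio, ← image_neg_Ioi, image_image]
  rw [← himage, integrableOn_image_iff_integrableOn_abs_deriv_smul measurableSet_Ioi
    (fun t _ => (hasDerivAt_neg t).exp.hasDerivWithinAt) (exp_injective.comp neg_injective).injOn]
  simp [abs_of_pos (exp_pos _)]

theorem integrableOn_Ioi_log_pow_mul_rpow (N : ℕ) {a s : ℝ} (ha : 0 < a) (hs : s < -1) :
    IntegrableOn (fun t => log t ^ N * t ^ s) (Ioi a) := by
  have hloc : LocallyIntegrableOn (fun t => log t ^ N * t ^ s) (Ici a) := by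
    refine ContinuousOn.locallyIntegrableOn (fun t ht => ?_) measurableSet_Ici
    have ht0 : t ≠ 0 := (ha.trans_le ht).ne'
    exact ((continuousAt_log ht0).pow N |>.mul
      (continuousAt_rpow_const _ _ (Or.inl ht0))).continuousWithinAt
  have hbigO : (fun t => log t ^ N * t ^ s) =O[atTop] fun t => t ^ ((s - 1) / 2) := by
    have hlog : (fun t => log t ^ N) =o[atTop] fun t => t ^ (-(s + 1) / 2) := by
      simpa using isLittleO_log_rpow_rpow_atTop (N : ℝ) (by linarith : 0 < -(s + 1) / 2)
    refine (hlog.isBigO.mul (isBigO_refl (fun t : ℝ => t ^ s) atTop)).trans_eventuallyEq ?_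
    filter_upwards [eventually_gt_atTop 0] with t ht
    rw [← rpow_add ht]
    ring_nf
  exact (hloc.integrableOn_of_isBigO_atTop hbigO
    (integrableAtFilter_rpow_atTop_iff.2 (by linarith))).mono_set Ioi_subset_Ici_self

theorem integrableOn_Ioo_mul_log_log_pow_div_sq (N : ℕ) {ε : ℝ} (hε0 : 0 < ε) (hε1 : ε < 1) :
    IntegrableOn (fun r => r * (log (log (1 / r)) ^ N / (r * log (1 / r)) ^ 2)) (Ioo 0 ε) := by
  have ha : 0 < -log ε := neg_pos.2 (log_neg hε0 hε1)
  rw [← exp_log hε0, ← neg_neg (log ε), integrableOn_Ioo_zero_exp_neg_iff]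
  refine (integrableOn_Ioi_log_pow_mul_rpow N ha (by norm_num : (-2 : ℝ) < -1)).congr_fun
    (fun t ht => ?_) measurableSet_Ioi
  have ht0 : 0 < t := ha.trans ht
  simp only [one_div, exp_neg, inv_inv, log_exp, smul_eq_mul]
  rw [rpow_neg ht0.le, rpow_two]
  field_simp

theorem integrableOn_loglog_pow_div_sq (N : ℕ) (ε : ℝ) (hε0 : 0 < ε)
    (hε : ε < Real.exp (-Real.exp 1)) :
    IntegrableOn
      (fun z : ℂ =>
        (Real.log (Real.log (1 / ‖z‖))) ^ N /
          (‖z‖ * Real.log (1 / ‖z‖)) ^ 2)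
      {z : ℂ | 0 < ‖z‖ ∧ ‖z‖ < ε} volume := by
  have hε1 : ε < 1 := hε.trans (exp_lt_one_iff.2 (neg_neg_of_pos (exp_pos 1)))
  let f : ℝ → ℝ := fun r => log (log (1 / r)) ^ N / (r * log (1 / r)) ^ 2
  have hball : IntegrableOn (fun z : ℂ => f ‖z‖) (Metric.ball 0 ε) := by
    rw [integrableOn_fun_norm_addHaar, Complex.finrank_real_complex]
    simpa only [Nat.reduceSub, pow_one, smul_eq_mul]
      using integrableOn_Ioo_mul_log_log_pow_div_sq N hε0 hε1
  exact hball.mono_set fun z hz => mem_ball_zero_iff.2 hz.2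
end

section
/- The integral of the function t ↦ log|t| / (1 + |t|²)² over ℂ with respect to two-dimensional Lebesgue measure equals 0. -/
/-! The integrand is radial, so the integral is a multiple of
`∫₀^∞ r log r / (1 + r²)² dr`, and the substitution `r ↦ 1/r` carries this integral to its
negative. -/

open MeasureTheory Set

theorem integral_Ioi_eq_zero_of_comp_inv_eq_neg {E : Type*} [NormedAddCommGroup E]
    [NormedSpace ℝ E] (g : ℝ → E) (hg : ∀ x > 0, g x⁻¹ = -(x ^ 2) • g x) :
    ∫ x in Ioi 0, g x = 0 := by
  have hsubst := integral_comp_rpow_Ioi g (p := -1) (by norm_num)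
  have hinv : ∫ x in Ioi 0, (|(-1 : ℝ)| * x ^ ((-1 : ℝ) - 1)) • g (x ^ (-1 : ℝ))
      = ∫ x in Ioi 0, -g x := by
    refine setIntegral_congr_fun measurableSet_Ioi fun x (hx : 0 < x) ↦ ?_
    have hx2 : x ^ ((-1 : ℝ) - 1) = (x ^ 2)⁻¹ := by
      rw [show (-1 : ℝ) - 1 = -(2 : ℕ) by norm_num, Real.rpow_neg hx.le, Real.rpow_natCast]
    rw [Real.rpow_neg_one, hg x hx, hx2, abs_neg, abs_one, one_mul, smul_smul, mul_neg,
      inv_mul_cancel₀ (by positivity), neg_one_smul]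
  rw [hinv, integral_neg] at hsubst
  have htwice : (2 : ℝ) • ∫ x in Ioi 0, g x = 0 := by
    rw [two_smul]
    nth_rewrite 1 [← hsubst]
    exact neg_add_cancel _
  exact (smul_eq_zero.mp htwice).resolve_left two_ne_zero

theorem integral_Ioi_mul_log_div_one_add_sq_sq :
    ∫ r in Ioi (0 : ℝ), r * Real.log r / (1 + r ^ 2) ^ 2 = 0 := by
  refine integral_Ioi_eq_zero_of_comp_inv_eq_neg _ fun r (hr : 0 < r) ↦ ?_
  rw [Real.log_inv, smul_eq_mul]
  field_simp
  ring

theorem integral_log_abs_div_one_add_abs_sq_sq :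
    ∫ t : ℂ, Real.log ‖t‖ / (1 + ‖t‖ ^ 2) ^ 2 = 0 := by
  rw [integral_fun_norm_addHaar volume fun r ↦ Real.log r / (1 + r ^ 2) ^ 2,
    Complex.finrank_real_complex]
  simp only [Nat.add_one_sub_one, pow_one, smul_eq_mul, ← mul_div_assoc,
    integral_Ioi_mul_log_div_one_add_sq_sq, mul_zero, smul_zero]
end
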